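/- arXiv:1504.05257 — 2 statements merged into one kernel-verified Lean document; each statement's English description precedes it below -/
import Mathlib

section
/- Let k be a number field and let f be a nonnegative-valued multiplicative function on the nonzero ideals of 𝓞_k. Suppose there are constants A ≥ 0 and B ≥ 0 such that: (i) for all y ≥ 0, Σ_{𝔭 : |𝔭| ≤ y} f(𝔭)·log|𝔭| ≤ A·y; and (ii) every finite partial sum of the double series Σ_𝔭 Σ_{ν ≥ 2} f(𝔭^ν)·log(|𝔭|^ν)/|𝔭|^ν is at most B. Then for all real x > 1, Σ_{𝔞 : |𝔞| ≤ x} f(𝔞) ≤ (A + B + 1)·(x/log x)·Σ_{𝔞 : |𝔞| ≤ x} f(𝔞)/|𝔞|, where both sums run over nonzero ideals 𝔞 of 𝓞_k with absolute norm at most x. -/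
open NumberField

section Aux
variable {k : Type*} [Field k] [NumberField k]

lemma aux_prod_f (f : Ideal (𝓞 k) → ℝ) (hf_one : f ⊤ = 1)
    (hf_mul : ∀ I J : Ideal (𝓞 k), I ≠ ⊥ → J ≠ ⊥ → I ⊔ J = ⊤ → f (I * J) = f I * f J)
    (s : Finset (Ideal (𝓞 k))) (hs : ∀ q ∈ s, q ≠ ⊥ ∧ q.IsPrime) (e : Ideal (𝓞 k) → ℕ) :
    f (∏ q ∈ s, q ^ e q) = ∏ q ∈ s, f (q ^ e q) := by
  classical
  induction s using Finset.induction with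
  | empty => simpa using hf_one
  | @insert a s ha ih =>
    have haP := hs a (Finset.mem_insert_self a s)
    have hsP : ∀ q ∈ s, q ≠ ⊥ ∧ q.IsPrime := fun q hq => hs q (Finset.mem_insert_of_mem hq)
    have hamax : a.IsMaximal := haP.2.isMaximal haP.1
    have hcop : IsCoprime (a ^ e a) (∏ q ∈ s, q ^ e q) := by
      refine IsCoprime.pow_left ?_
      refine IsCoprime.prod_right fun q hq => IsCoprime.pow_right ?_
      have hqmax : q.IsMaximal := (hsP q hq).2.isMaximal (hsP q hq).1
      exact Ideal.isCoprime_iff_sup_eq.mpr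
        (hamax.coprime_of_ne hqmax (by rintro rfl; exact ha hq))
    have h1 : (a ^ e a : Ideal (𝓞 k)) ≠ ⊥ := pow_ne_zero (e a) haP.1
    have h2 : (∏ q ∈ s, q ^ e q : Ideal (𝓞 k)) ≠ ⊥ := by
      rw [show (⊥ : Ideal (𝓞 k)) = 0 from rfl, Finset.prod_ne_zero_iff]
      exact fun q hq => pow_ne_zero _ ((hsP q hq).1)
    rw [Finset.prod_insert ha, Finset.prod_insert ha,
      hf_mul _ _ h1 h2 (Ideal.isCoprime_iff_sup_eq.mp hcop), ih hsP]

end Aux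

set_option maxHeartbeats 1000000 in
/-- **Mean value theorem for multiplicative functions on ideals** (Hall–Tenenbaum, Theorem 01,
generalized to number fields): first inequality. -/
theorem stmt_0 (k : Type*) [Field k] [NumberField k]
    (f : Ideal (𝓞 k) → ℝ)
    (hf_nonneg : ∀ I : Ideal (𝓞 k), I ≠ ⊥ → 0 ≤ f I)
    (hf_one : f ⊤ = 1)
    (hf_mul : ∀ I J : Ideal (𝓞 k), I ≠ ⊥ → J ≠ ⊥ → I ⊔ J = ⊤ → f (I * J) = f I * f J)
    (A B : ℝ) (hA : 0 ≤ A) (hB : 0 ≤ B)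
    (hA_bound : ∀ y : ℝ, 0 ≤ y →
      (∑ᶠ P ∈ {P : Ideal (𝓞 k) | P ≠ ⊥ ∧ P.IsPrime ∧ (Ideal.absNorm P : ℝ) ≤ y},
        f P * Real.log (Ideal.absNorm P)) ≤ A * y)
    (hB_bound : ∀ S : Finset (Ideal (𝓞 k) × ℕ),
      (∀ q ∈ S, q.1 ≠ ⊥ ∧ q.1.IsPrime ∧ 2 ≤ q.2) →
      (∑ q ∈ S, f (q.1 ^ q.2) * Real.log ((Ideal.absNorm q.1 : ℝ) ^ q.2) /
        (Ideal.absNorm q.1 : ℝ) ^ q.2) ≤ B) :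
    ∀ x : ℝ, 1 < x →
      (∑ᶠ I ∈ {I : Ideal (𝓞 k) | I ≠ ⊥ ∧ (Ideal.absNorm I : ℝ) ≤ x}, f I) ≤
        (A + B + 1) * (x / Real.log x) *
          ∑ᶠ I ∈ {I : Ideal (𝓞 k) | I ≠ ⊥ ∧ (Ideal.absNorm I : ℝ) ≤ x},
            f I / (Ideal.absNorm I : ℝ) := by
  classical
  intro x hx
  have hx0 : (0:ℝ) < x := one_pos.trans hx
  have hlogx : 0 < Real.log x := Real.log_pos hx
  have hfin : {I : Ideal (𝓞 k) | I ≠ ⊥ ∧ (Ideal.absNorm I : ℝ) ≤ x}.Finite :=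
    (Ideal.finite_setOf_absNorm_le ⌊x⌋₊).subset (fun I hI => Nat.le_floor hI.2)
  rw [finsum_mem_eq_finite_toFinset_sum _ hfin, finsum_mem_eq_finite_toFinset_sum _ hfin]
  set 𝒜 : Finset (Ideal (𝓞 k)) := hfin.toFinset with h𝒜def
  have h𝒜 : ∀ I : Ideal (𝓞 k), I ∈ 𝒜 ↔ I ≠ ⊥ ∧ (Ideal.absNorm I : ℝ) ≤ x := fun I =>
    hfin.mem_toFinset
  have hN1 : ∀ I : Ideal (𝓞 k), I ≠ ⊥ → (1:ℝ) ≤ (Ideal.absNorm I : ℝ) := by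
    intro I hI
    have h : 1 ≤ Ideal.absNorm I :=
      Nat.one_le_iff_ne_zero.mpr (fun h0 => hI (Ideal.absNorm_eq_zero_iff.mp h0))
    exact_mod_cast h
  set T : ℝ := ∑ I ∈ 𝒜, f I / (Ideal.absNorm I : ℝ) with hT
  have hT0 : 0 ≤ T :=
    Finset.sum_nonneg fun I hI =>
      div_nonneg (hf_nonneg I ((h𝒜 I).mp hI).1) (by positivity)
  -- the key inequality
  have part2 : ∑ I ∈ 𝒜, f I * Real.log (Ideal.absNorm I : ℝ) ≤ (A + B) * (x * T) := by
    set nfac : Ideal (𝓞 k) → Finset (Ideal (𝓞 k)) :=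
      fun I => (UniqueFactorizationMonoid.normalizedFactors I).toFinset with hnfac
    set cnt : Ideal (𝓞 k) → Ideal (𝓞 k) → ℕ :=
      fun I q => (UniqueFactorizationMonoid.normalizedFactors I).count q with hcnt
    set comp : Ideal (𝓞 k) → Ideal (𝓞 k) → Ideal (𝓞 k) :=
      fun I q => ∏ r ∈ (nfac I).erase q, r ^ cnt I r with hcomp
    have hps : ∀ (I : Ideal (𝓞 k)), I ≠ ⊥ → ∀ q ∈ nfac I, q ≠ ⊥ ∧ q.IsPrime := by
      intro I hI q hq
      have hp : Prime q :=
        UniqueFactorizationMonoid.prime_of_normalized_factor q (Multiset.mem_toFinset.mp hq)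
      exact ⟨hp.ne_zero, Ideal.isPrime_of_prime hp⟩
    have hprodI : ∀ (I : Ideal (𝓞 k)), I ≠ ⊥ → ∏ r ∈ nfac I, r ^ cnt I r = I := by
      intro I hI
      rw [← Finset.prod_multiset_count]
      exact prod_normalizedFactors_eq_self hI
    have hmul2 : ∀ (I : Ideal (𝓞 k)), I ≠ ⊥ → ∀ q ∈ nfac I,
        q ^ cnt I q * comp I q = I := by
      intro I hI q hq
      show q ^ cnt I q * ∏ r ∈ (nfac I).erase q, r ^ cnt I r = I
      exact (Finset.mul_prod_erase _ (fun r => r ^ cnt I r) hq).trans (hprodI I hI)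
    have hIdent : ∀ I ∈ 𝒜, f I * Real.log (Ideal.absNorm I : ℝ) =
        ∑ q ∈ nfac I, f (q ^ cnt I q) * Real.log ((Ideal.absNorm q : ℝ) ^ cnt I q)
          * f (comp I q) := by
      intro I hI𝒜
      obtain ⟨hI, -⟩ := (h𝒜 I).mp hI𝒜
      have hpsI := hps I hI
      have hfprod : f I = ∏ q ∈ nfac I, f (q ^ cnt I q) := by
        conv_lhs => rw [← hprodI I hI]
        exact aux_prod_f f hf_one hf_mul _ hpsI _
      have hlogsum : Real.log (Ideal.absNorm I : ℝ) =
          ∑ q ∈ nfac I, Real.log ((Ideal.absNorm q : ℝ) ^ cnt I q) := by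
        have hcast : (Ideal.absNorm I : ℝ) = ∏ q ∈ nfac I, (Ideal.absNorm q : ℝ) ^ cnt I q := by
          conv_lhs => rw [← hprodI I hI]
          rw [map_prod]
          push_cast [map_pow]
          rfl
        rw [hcast, Real.log_prod]
        intro q hq
        have := hN1 q (hpsI q hq).1
        positivity
      rw [hlogsum, Finset.mul_sum]
      refine Finset.sum_congr rfl fun q hq => ?_
      have hsplitf : f I = f (q ^ cnt I q) * f (comp I q) := by
        rw [hfprod]
        have hc : f (comp I q) = ∏ r ∈ (nfac I).erase q, f (r ^ cnt I r) :=
          aux_prod_f f hf_one hf_mul _ (fun r hr => hpsI r (Finset.mem_erase.mp hr).2) _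
        rw [hc]
        exact (Finset.mul_prod_erase _ (fun r => f (r ^ cnt I r)) hq).symm
      rw [hsplitf]; ring
    -- reindex over triples (q, ν, b)
    set F : Ideal (𝓞 k) × ℕ × Ideal (𝓞 k) → ℝ := fun t =>
      f (t.1 ^ t.2.1) * Real.log ((Ideal.absNorm t.1 : ℝ) ^ t.2.1) * f t.2.2 with hF
    set sig : Finset ((_ : Ideal (𝓞 k)) × Ideal (𝓞 k)) := 𝒜.sigma nfac with hsig
    set φ : (_ : Ideal (𝓞 k)) × Ideal (𝓞 k) → Ideal (𝓞 k) × ℕ × Ideal (𝓞 k) :=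
      fun p => (p.2, cnt p.1 p.2, comp p.1 p.2) with hφ
    set 𝒯 : Finset (Ideal (𝓞 k) × ℕ × Ideal (𝓞 k)) := sig.image φ with h𝒯def
    have hinj : ∀ p ∈ sig, ∀ p' ∈ sig, φ p = φ p' → p = p' := by
      intro p hp p' hp' heq
      have h1 : p.2 = p'.2 := congrArg Prod.fst heq
      have h2 : cnt p.1 p.2 = cnt p'.1 p'.2 := congrArg (fun z => z.2.1) heq
      have h3 : comp p.1 p.2 = comp p'.1 p'.2 := congrArg (fun z => z.2.2) heq
      obtain ⟨hpA, hpq⟩ := Finset.mem_sigma.mp hp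
      obtain ⟨hp'A, hp'q⟩ := Finset.mem_sigma.mp hp'
      have e1 : p.1 = p'.1 := by
        calc p.1 = p.2 ^ cnt p.1 p.2 * comp p.1 p.2 :=
              (hmul2 p.1 ((h𝒜 p.1).mp hpA).1 p.2 hpq).symm
          _ = p'.2 ^ cnt p'.1 p'.2 * comp p'.1 p'.2 := by rw [h2, h3, h1]
          _ = p'.1 := hmul2 p'.1 ((h𝒜 p'.1).mp hp'A).1 p'.2 hp'q
      exact Sigma.ext e1 (heq_of_eq h1)
    have hsum𝒯 : ∑ I ∈ 𝒜, f I * Real.log (Ideal.absNorm I : ℝ) = ∑ t ∈ 𝒯, F t := by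
      calc ∑ I ∈ 𝒜, f I * Real.log (Ideal.absNorm I : ℝ)
          = ∑ I ∈ 𝒜, ∑ q ∈ nfac I, f (q ^ cnt I q) *
              Real.log ((Ideal.absNorm q : ℝ) ^ cnt I q) * f (comp I q) :=
            Finset.sum_congr rfl hIdent
        _ = ∑ p ∈ sig, F (φ p) := Finset.sum_sigma' 𝒜 nfac _
        _ = ∑ t ∈ 𝒯, F t := (Finset.sum_image hinj).symm
    have htrip : ∀ t ∈ 𝒯, (t.1 ≠ ⊥ ∧ t.1.IsPrime) ∧ 1 ≤ t.2.1 ∧ (t.2.2 ∈ 𝒜) ∧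
        (Ideal.absNorm t.1 : ℝ) ^ t.2.1 * (Ideal.absNorm t.2.2 : ℝ) ≤ x := by
      intro t ht
      obtain ⟨p, hp, rfl⟩ := Finset.mem_image.mp ht
      obtain ⟨hpA, hpq⟩ := Finset.mem_sigma.mp hp
      obtain ⟨hIne, hIle⟩ := (h𝒜 p.1).mp hpA
      have hq := hps p.1 hIne p.2 hpq
      have hcnt1 : 1 ≤ cnt p.1 p.2 := Multiset.count_pos.mpr (Multiset.mem_toFinset.mp hpq)
      have hcompne : comp p.1 p.2 ≠ ⊥ := by
        intro h0
        have hm := hmul2 p.1 hIne p.2 hpq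
        rw [h0, Ideal.mul_bot] at hm
        exact hIne hm.symm
      have hNmul : (Ideal.absNorm p.2 : ℝ) ^ cnt p.1 p.2 *
          (Ideal.absNorm (comp p.1 p.2) : ℝ) = (Ideal.absNorm p.1 : ℝ) := by
        have hm := hmul2 p.1 hIne p.2 hpq
        have : Ideal.absNorm (p.2 ^ cnt p.1 p.2 * comp p.1 p.2) = Ideal.absNorm p.1 := by
          rw [hm]
        rw [map_mul, map_pow] at this
        exact_mod_cast congrArg (fun n : ℕ => (n : ℝ)) this
      have hQ1 : (1:ℝ) ≤ (Ideal.absNorm p.2 : ℝ) ^ cnt p.1 p.2 :=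
        one_le_pow₀ (hN1 p.2 hq.1)
      have hxle : (Ideal.absNorm p.2 : ℝ) ^ cnt p.1 p.2 *
          (Ideal.absNorm (comp p.1 p.2) : ℝ) ≤ x := by rw [hNmul]; exact hIle
      have hNcnn : (0:ℝ) ≤ (Ideal.absNorm (comp p.1 p.2) : ℝ) := by positivity
      refine ⟨hq, hcnt1, (h𝒜 _).mpr ⟨hcompne, ?_⟩, hxle⟩
      exact le_trans (le_mul_of_one_le_left hNcnn hQ1) hxle
    -- split off ν = 1
    set 𝒯₁ : Finset (Ideal (𝓞 k) × ℕ × Ideal (𝓞 k)) :=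
      𝒯.filter (fun t => t.2.1 = 1) with h𝒯₁
    set 𝒯₂ : Finset (Ideal (𝓞 k) × ℕ × Ideal (𝓞 k)) :=
      𝒯.filter (fun t => ¬ t.2.1 = 1) with h𝒯₂
    have hsplit𝒯 : ∑ t ∈ 𝒯, F t = ∑ t ∈ 𝒯₁, F t + ∑ t ∈ 𝒯₂, F t :=
      (Finset.sum_filter_add_sum_filter_not 𝒯 (fun t => t.2.1 = 1) F).symm
    have hE2 : ∑ t ∈ 𝒯₂, F t ≤ B * (x * T) := by
      set π : Ideal (𝓞 k) × ℕ × Ideal (𝓞 k) → Ideal (𝓞 k) × ℕ :=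
        fun t => (t.1, t.2.1) with hπ
      have hmaps : ∀ t ∈ 𝒯₂, π t ∈ 𝒯₂.image π := fun t ht => Finset.mem_image_of_mem _ ht
      rw [← Finset.sum_fiberwise_of_maps_to hmaps F]
      have hinner : ∀ p ∈ 𝒯₂.image π,
          (∑ t ∈ 𝒯₂.filter (fun t => π t = p), F t) ≤
            (f (p.1 ^ p.2) * Real.log ((Ideal.absNorm p.1 : ℝ) ^ p.2) /
              (Ideal.absNorm p.1 : ℝ) ^ p.2) * (x * T) := by
        intro p hp
        obtain ⟨t0, ht0, rfl⟩ := Finset.mem_image.mp hp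
        have ht0𝒯 : t0 ∈ 𝒯 := (Finset.mem_filter.mp ht0).1
        have hq := (htrip t0 ht0𝒯).1
        have hπ1 : (π t0).1 = t0.1 := rfl
        have hπ2 : (π t0).2 = t0.2.1 := rfl
        rw [hπ1, hπ2]
        have hQ1 : (1:ℝ) ≤ (Ideal.absNorm t0.1 : ℝ) ^ t0.2.1 := one_le_pow₀ (hN1 t0.1 hq.1)
        have hQ0 : (0:ℝ) < (Ideal.absNorm t0.1 : ℝ) ^ t0.2.1 := lt_of_lt_of_le one_pos hQ1
        have hc0 : 0 ≤ f (t0.1 ^ t0.2.1) * Real.log ((Ideal.absNorm t0.1 : ℝ) ^ t0.2.1) :=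
          mul_nonneg (hf_nonneg _ (pow_ne_zero _ hq.1)) (Real.log_nonneg hQ1)
        have hstep : (∑ t ∈ 𝒯₂.filter (fun t => π t = π t0), F t) =
            f (t0.1 ^ t0.2.1) * Real.log ((Ideal.absNorm t0.1 : ℝ) ^ t0.2.1) *
              ∑ t ∈ 𝒯₂.filter (fun t => π t = π t0), f t.2.2 := by
          rw [Finset.mul_sum]
          refine Finset.sum_congr rfl fun t ht => ?_
          have h := (Finset.mem_filter.mp ht).2
          have h1 : t.1 = t0.1 := congrArg (fun z : Ideal (𝓞 k) × ℕ => z.1) h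
          have h2 : t.2.1 = t0.2.1 := congrArg (fun z : Ideal (𝓞 k) × ℕ => z.2) h
          show f (t.1 ^ t.2.1) * Real.log ((Ideal.absNorm t.1 : ℝ) ^ t.2.1) * f t.2.2 = _
          rw [h1, h2]
        have hinjb : ∀ t ∈ 𝒯₂.filter (fun t => π t = π t0),
            ∀ t' ∈ 𝒯₂.filter (fun t => π t = π t0), t.2.2 = t'.2.2 → t = t' := by
          intro t ht t' ht' hbb
          have h := (Finset.mem_filter.mp ht).2
          have h' := (Finset.mem_filter.mp ht').2
          have h1 : t.1 = t'.1 := by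
            rw [show t.1 = (π t).1 from rfl, show t'.1 = (π t').1 from rfl, h, h']
          have h2 : t.2.1 = t'.2.1 := by
            rw [show t.2.1 = (π t).2 from rfl, show t'.2.1 = (π t').2 from rfl, h, h']
          exact Prod.ext h1 (Prod.ext h2 hbb)
        have hsub : (∑ t ∈ 𝒯₂.filter (fun t => π t = π t0),
            f t.2.2 / (Ideal.absNorm t.2.2 : ℝ)) ≤ T := by
          have himg : (∑ b ∈ (𝒯₂.filter (fun t => π t = π t0)).image (fun t => t.2.2),
                f b / (Ideal.absNorm b : ℝ)) =
              ∑ t ∈ 𝒯₂.filter (fun t => π t = π t0),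
                f t.2.2 / (Ideal.absNorm t.2.2 : ℝ) := Finset.sum_image hinjb
          rw [← himg, hT]
          refine Finset.sum_le_sum_of_subset_of_nonneg ?_ ?_
          · intro b hb
            obtain ⟨t, ht, rfl⟩ := Finset.mem_image.mp hb
            exact (htrip t (Finset.mem_filter.mp (Finset.mem_filter.mp ht).1).1).2.2.1
          · intro b hb _
            exact div_nonneg (hf_nonneg b ((h𝒜 b).mp hb).1) (by positivity)
        have hsumb : (∑ t ∈ 𝒯₂.filter (fun t => π t = π t0), f t.2.2) ≤
            (x / (Ideal.absNorm t0.1 : ℝ) ^ t0.2.1) * T := by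
          calc (∑ t ∈ 𝒯₂.filter (fun t => π t = π t0), f t.2.2)
              ≤ ∑ t ∈ 𝒯₂.filter (fun t => π t = π t0),
                  (x / (Ideal.absNorm t0.1 : ℝ) ^ t0.2.1) *
                    (f t.2.2 / (Ideal.absNorm t.2.2 : ℝ)) := by
                refine Finset.sum_le_sum fun t ht => ?_
                have ht𝒯 : t ∈ 𝒯 := (Finset.mem_filter.mp (Finset.mem_filter.mp ht).1).1
                have hh := (Finset.mem_filter.mp ht).2
                have h1 : t.1 = t0.1 := congrArg (fun z : Ideal (𝓞 k) × ℕ => z.1) hh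
                have h2 : t.2.1 = t0.2.1 := congrArg (fun z : Ideal (𝓞 k) × ℕ => z.2) hh
                have hb𝒜 : t.2.2 ∈ 𝒜 := (htrip t ht𝒯).2.2.1
                have hbne : t.2.2 ≠ ⊥ := ((h𝒜 _).mp hb𝒜).1
                have hNb1 : (1:ℝ) ≤ (Ideal.absNorm t.2.2 : ℝ) := hN1 _ hbne
                have hNb0 : (0:ℝ) < (Ideal.absNorm t.2.2 : ℝ) := lt_of_lt_of_le one_pos hNb1
                have hxle := (htrip t ht𝒯).2.2.2
                rw [h1, h2] at hxle
                have hble : (Ideal.absNorm t.2.2 : ℝ) ≤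
                    x / (Ideal.absNorm t0.1 : ℝ) ^ t0.2.1 := by
                  rw [le_div_iff₀ hQ0]
                  linarith [hxle]
                have hfb : 0 ≤ f t.2.2 / (Ideal.absNorm t.2.2 : ℝ) :=
                  div_nonneg (hf_nonneg _ hbne) hNb0.le
                calc f t.2.2 = (f t.2.2 / (Ideal.absNorm t.2.2 : ℝ)) *
                      (Ideal.absNorm t.2.2 : ℝ) := by field_simp
                  _ ≤ (f t.2.2 / (Ideal.absNorm t.2.2 : ℝ)) *
                      (x / (Ideal.absNorm t0.1 : ℝ) ^ t0.2.1) :=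
                    mul_le_mul_of_nonneg_left hble hfb
                  _ = (x / (Ideal.absNorm t0.1 : ℝ) ^ t0.2.1) *
                      (f t.2.2 / (Ideal.absNorm t.2.2 : ℝ)) := mul_comm _ _
            _ = (x / (Ideal.absNorm t0.1 : ℝ) ^ t0.2.1) *
                  ∑ t ∈ 𝒯₂.filter (fun t => π t = π t0),
                      f t.2.2 / (Ideal.absNorm t.2.2 : ℝ) := (Finset.mul_sum _ _ _).symm
            _ ≤ (x / (Ideal.absNorm t0.1 : ℝ) ^ t0.2.1) * T :=
                mul_le_mul_of_nonneg_left hsub (by positivity)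
        rw [hstep]
        calc f (t0.1 ^ t0.2.1) * Real.log ((Ideal.absNorm t0.1 : ℝ) ^ t0.2.1) *
              ∑ t ∈ 𝒯₂.filter (fun t => π t = π t0), f t.2.2
            ≤ f (t0.1 ^ t0.2.1) * Real.log ((Ideal.absNorm t0.1 : ℝ) ^ t0.2.1) *
              ((x / (Ideal.absNorm t0.1 : ℝ) ^ t0.2.1) * T) :=
              mul_le_mul_of_nonneg_left hsumb hc0
          _ = (f (t0.1 ^ t0.2.1) * Real.log ((Ideal.absNorm t0.1 : ℝ) ^ t0.2.1) /
                (Ideal.absNorm t0.1 : ℝ) ^ t0.2.1) * (x * T) := by ring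
      have hcond : ∀ p ∈ 𝒯₂.image π, p.1 ≠ ⊥ ∧ p.1.IsPrime ∧ 2 ≤ p.2 := by
        intro p hp
        obtain ⟨t, ht, rfl⟩ := Finset.mem_image.mp hp
        have ht𝒯 : t ∈ 𝒯 := (Finset.mem_filter.mp ht).1
        have hne1 : ¬ t.2.1 = 1 := by
          have := (Finset.mem_filter.mp ht).2
          simpa using this
        have h1 := (htrip t ht𝒯).2.1
        refine ⟨(htrip t ht𝒯).1.1, (htrip t ht𝒯).1.2, ?_⟩
        show 2 ≤ t.2.1
        omega
      calc (∑ p ∈ 𝒯₂.image π, ∑ t ∈ 𝒯₂.filter (fun t => π t = p), F t)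
          ≤ ∑ p ∈ 𝒯₂.image π,
              (f (p.1 ^ p.2) * Real.log ((Ideal.absNorm p.1 : ℝ) ^ p.2) /
                (Ideal.absNorm p.1 : ℝ) ^ p.2) * (x * T) := Finset.sum_le_sum hinner
        _ = (∑ p ∈ 𝒯₂.image π, f (p.1 ^ p.2) * Real.log ((Ideal.absNorm p.1 : ℝ) ^ p.2) /
                (Ideal.absNorm p.1 : ℝ) ^ p.2) * (x * T) := (Finset.sum_mul _ _ _).symm
        _ ≤ B * (x * T) :=
            mul_le_mul_of_nonneg_right (hB_bound _ hcond) (by positivity)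
    have hE1 : ∑ t ∈ 𝒯₁, F t ≤ A * (x * T) := by
      set ρ : Ideal (𝓞 k) × ℕ × Ideal (𝓞 k) → Ideal (𝓞 k) := fun t => t.2.2 with hρ
      have hmaps : ∀ t ∈ 𝒯₁, ρ t ∈ 𝒯₁.image ρ := fun t ht => Finset.mem_image_of_mem _ ht
      rw [← Finset.sum_fiberwise_of_maps_to hmaps F]
      have hinner : ∀ b ∈ 𝒯₁.image ρ,
          (∑ t ∈ 𝒯₁.filter (fun t => ρ t = b), F t) ≤
            (A * x) * (f b / (Ideal.absNorm b : ℝ)) := by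
        intro b hb
        obtain ⟨t0, ht0, rfl⟩ := Finset.mem_image.mp hb
        have ht0𝒯 : t0 ∈ 𝒯 := (Finset.mem_filter.mp ht0).1
        have hbA : t0.2.2 ∈ 𝒜 := (htrip t0 ht0𝒯).2.2.1
        have hbne : t0.2.2 ≠ ⊥ := ((h𝒜 _).mp hbA).1
        have hNb1 : (1:ℝ) ≤ (Ideal.absNorm t0.2.2 : ℝ) := hN1 _ hbne
        have hNb0 : (0:ℝ) < (Ideal.absNorm t0.2.2 : ℝ) := lt_of_lt_of_le one_pos hNb1
        have hy0 : (0:ℝ) ≤ x / (Ideal.absNorm t0.2.2 : ℝ) := by positivity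
        have hPfin : {P : Ideal (𝓞 k) | P ≠ ⊥ ∧ P.IsPrime ∧
            (Ideal.absNorm P : ℝ) ≤ x / (Ideal.absNorm t0.2.2 : ℝ)}.Finite :=
          hfin.subset (fun P hP =>
            ⟨hP.1, le_trans hP.2.2 (div_le_self hx0.le hNb1)⟩)
        have hAb := hA_bound (x / (Ideal.absNorm t0.2.2 : ℝ)) hy0
        rw [finsum_mem_eq_finite_toFinset_sum _ hPfin] at hAb
        have hinjq : ∀ t ∈ 𝒯₁.filter (fun t => ρ t = ρ t0),
            ∀ t' ∈ 𝒯₁.filter (fun t => ρ t = ρ t0), t.1 = t'.1 → t = t' := by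
          intro t ht t' ht' h11
          have hb : t.2.2 = t0.2.2 := (Finset.mem_filter.mp ht).2
          have hb' : t'.2.2 = t0.2.2 := (Finset.mem_filter.mp ht').2
          have hν : t.2.1 = 1 := by
            have := (Finset.mem_filter.mp (Finset.mem_filter.mp ht).1).2
            simpa using this
          have hν' : t'.2.1 = 1 := by
            have := (Finset.mem_filter.mp (Finset.mem_filter.mp ht').1).2
            simpa using this
          exact Prod.ext h11 (Prod.ext (hν.trans hν'.symm) (hb.trans hb'.symm))
        have hstep : (∑ t ∈ 𝒯₁.filter (fun t => ρ t = ρ t0), F t) =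
            (∑ t ∈ 𝒯₁.filter (fun t => ρ t = ρ t0),
              f t.1 * Real.log (Ideal.absNorm t.1 : ℝ)) * f t0.2.2 := by
          rw [Finset.sum_mul]
          refine Finset.sum_congr rfl fun t ht => ?_
          have hb : t.2.2 = t0.2.2 := (Finset.mem_filter.mp ht).2
          have hν : t.2.1 = 1 := by
            have := (Finset.mem_filter.mp (Finset.mem_filter.mp ht).1).2
            simpa using this
          show f (t.1 ^ t.2.1) * Real.log ((Ideal.absNorm t.1 : ℝ) ^ t.2.1) * f t.2.2 = _
          rw [hν, hb, pow_one, pow_one]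
        have hQsub : (∑ t ∈ 𝒯₁.filter (fun t => ρ t = ρ t0),
            f t.1 * Real.log (Ideal.absNorm t.1 : ℝ)) ≤
            A * (x / (Ideal.absNorm t0.2.2 : ℝ)) := by
          have himg : (∑ q ∈ (𝒯₁.filter (fun t => ρ t = ρ t0)).image (fun t => t.1),
              f q * Real.log (Ideal.absNorm q : ℝ)) =
              ∑ t ∈ 𝒯₁.filter (fun t => ρ t = ρ t0),
                f t.1 * Real.log (Ideal.absNorm t.1 : ℝ) := Finset.sum_image hinjq
          rw [← himg]
          refine le_trans (Finset.sum_le_sum_of_subset_of_nonneg ?_ ?_) hAb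
          · intro q hq
            obtain ⟨t, ht, rfl⟩ := Finset.mem_image.mp hq
            have ht𝒯 : t ∈ 𝒯 := (Finset.mem_filter.mp (Finset.mem_filter.mp ht).1).1
            have hb : t.2.2 = t0.2.2 := (Finset.mem_filter.mp ht).2
            have hν : t.2.1 = 1 := by
              have := (Finset.mem_filter.mp (Finset.mem_filter.mp ht).1).2
              simpa using this
            have hxle := (htrip t ht𝒯).2.2.2
            rw [hν, hb, pow_one] at hxle
            rw [Set.Finite.mem_toFinset]
            refine ⟨(htrip t ht𝒯).1.1, (htrip t ht𝒯).1.2, ?_⟩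
            rw [le_div_iff₀ hNb0]
            exact hxle
          · intro q hq _
            have hq' := (Set.Finite.mem_toFinset hPfin).mp hq
            exact mul_nonneg (hf_nonneg q hq'.1) (Real.log_nonneg (hN1 q hq'.1))
        rw [hstep]
        have hfb : 0 ≤ f t0.2.2 := hf_nonneg _ hbne
        calc (∑ t ∈ 𝒯₁.filter (fun t => ρ t = ρ t0),
              f t.1 * Real.log (Ideal.absNorm t.1 : ℝ)) * f t0.2.2
            ≤ (A * (x / (Ideal.absNorm t0.2.2 : ℝ))) * f t0.2.2 :=
              mul_le_mul_of_nonneg_right hQsub hfb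
          _ = (A * x) * (f t0.2.2 / (Ideal.absNorm t0.2.2 : ℝ)) := by ring
      have hsubT : (∑ b ∈ 𝒯₁.image ρ, f b / (Ideal.absNorm b : ℝ)) ≤ T := by
        rw [hT]
        refine Finset.sum_le_sum_of_subset_of_nonneg ?_ ?_
        · intro b hb
          obtain ⟨t, ht, rfl⟩ := Finset.mem_image.mp hb
          exact (htrip t (Finset.mem_filter.mp ht).1).2.2.1
        · intro b hb _
          exact div_nonneg (hf_nonneg b ((h𝒜 b).mp hb).1) (by positivity)
      calc (∑ b ∈ 𝒯₁.image ρ, ∑ t ∈ 𝒯₁.filter (fun t => ρ t = b), F t)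
          ≤ ∑ b ∈ 𝒯₁.image ρ, (A * x) * (f b / (Ideal.absNorm b : ℝ)) :=
            Finset.sum_le_sum hinner
        _ = (A * x) * ∑ b ∈ 𝒯₁.image ρ, f b / (Ideal.absNorm b : ℝ) :=
            (Finset.mul_sum _ _ _).symm
        _ ≤ (A * x) * T := mul_le_mul_of_nonneg_left hsubT (by positivity)
        _ = A * (x * T) := by ring
    rw [hsum𝒯, hsplit𝒯]
    have : A * (x * T) + B * (x * T) = (A + B) * (x * T) := by ring
    linarith
  have key : (∑ I ∈ 𝒜, f I) * Real.log x ≤ (A + B + 1) * x * T := by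
    have hsplit : (∑ I ∈ 𝒜, f I) * Real.log x
        = (∑ I ∈ 𝒜, f I * Real.log (x / (Ideal.absNorm I : ℝ)))
          + ∑ I ∈ 𝒜, f I * Real.log (Ideal.absNorm I : ℝ) := by
      rw [Finset.sum_mul, ← Finset.sum_add_distrib]
      refine Finset.sum_congr rfl fun I hI => ?_
      have h1 : (1:ℝ) ≤ (Ideal.absNorm I : ℝ) := hN1 I ((h𝒜 I).mp hI).1
      rw [Real.log_div hx0.ne' (by linarith)]
      ring
    have part1 : ∑ I ∈ 𝒜, f I * Real.log (x / (Ideal.absNorm I : ℝ)) ≤ x * T := by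
      rw [hT, Finset.mul_sum]
      refine Finset.sum_le_sum fun I hI => ?_
      have h1 : (1:ℝ) ≤ (Ideal.absNorm I : ℝ) := hN1 I ((h𝒜 I).mp hI).1
      have h0 : (0:ℝ) < (Ideal.absNorm I : ℝ) := lt_of_lt_of_le one_pos h1
      have hlog : Real.log (x / (Ideal.absNorm I : ℝ)) ≤ x / (Ideal.absNorm I : ℝ) := by
        have := Real.log_le_sub_one_of_pos (div_pos hx0 h0)
        linarith
      calc f I * Real.log (x / (Ideal.absNorm I : ℝ))
          ≤ f I * (x / (Ideal.absNorm I : ℝ)) :=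
            mul_le_mul_of_nonneg_left hlog (hf_nonneg I ((h𝒜 I).mp hI).1)
        _ = x * (f I / (Ideal.absNorm I : ℝ)) := by ring
    rw [hsplit]
    nlinarith [part1, part2]
  have hrw : (A + B + 1) * (x / Real.log x) * T = ((A + B + 1) * x * T) / Real.log x := by ring
  rw [hrw, le_div_iff₀ hlogx]
  exact key
end

section
/- Let k be a number field and let f be a nonnegative-valued multiplicative function on the nonzero ideals of 𝓞_k. Suppose there are constants A ≥ 0 and B ≥ 0 such that: (i) for all y ≥ 0, Σ_{𝔭 : |𝔭| ≤ y} f(𝔭)·log|𝔭| ≤ A·y; and (ii) every finite partial sum of the double series Σ_𝔭 Σ_{ν ≥ 2} f(𝔭^ν)·log(|𝔭|^ν)/|𝔭|^ν is at most B. Then for all real x > 1, Σ_{𝔞 : |𝔞| ≤ x} f(𝔞) ≤ (A + B + 1)·(x/log x)·∏_{𝔭 : |𝔭| ≤ x} (Σ_{ν = 0}^{∞} f(𝔭^ν)/|𝔭|^ν), where the sum on the left runs over nonzero ideals of norm at most x, the product runs over the finitely many nonzero prime ideals of norm at most x, and each Euler factor Σ_{ν ≥ 0} f(𝔭^ν)/|𝔭|^ν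 is interpreted as a sum in the extended nonnegative reals [0,∞] (so the inequality is an inequality of extended nonnegative reals, trivially true if some factor diverges). -/
/-!
Write `S = ∑_{N𝔞 ≤ x} f(𝔞)` and `Q = ∑_{N𝔞 ≤ x} f(𝔞) / N𝔞`. Splitting
`log x = log N𝔞 + log (x / N𝔞)` and using `log t ≤ t` gives `S log x ≤ ∑ f(𝔞) log N𝔞 + x Q`.
For the first sum, `log N𝔞 = ∑_{𝔭^ν ∥ 𝔞} log N𝔭^ν`, and each pair `(𝔞, 𝔭)` with `𝔞 = 𝔭^ν 𝔟`,
`𝔭 ∤ 𝔟`, contributes `f(𝔟) f(𝔭^ν) log N𝔭^ν`; distinct pairs give distinct `(𝔟, 𝔭, ν)` with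
`N𝔭^ν ≤ x / N𝔟`. Hypotheses (i) for `ν = 1` and (ii) for `ν ≥ 2` bound
`∑_{N𝔭^ν ≤ y} f(𝔭^ν) log N𝔭^ν` by `(A + B) y`, so `∑ f(𝔞) log N𝔞 ≤ (A + B) x Q`.
Finally `Q` is at most the Euler product over the primes of norm `≤ x`, because every `𝔞` of
norm `≤ x` is a product of powers of such primes.
-/

open UniqueFactorizationMonoid
open scoped ENNReal

lemma Finset.sum_comp_le_sum_of_injOn {ι κ M : Type*} [AddCommMonoid M] [PartialOrder M]
    [IsOrderedAddMonoid M] {s : Finset ι} {t : Finset κ} {φ : ι → κ} (F : κ → M)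
    (hφ : ∀ i ∈ s, φ i ∈ t) (hinj : Set.InjOn φ s) (hF : ∀ u ∈ t, 0 ≤ F u) :
    ∑ i ∈ s, F (φ i) ≤ ∑ u ∈ t, F u := by
  classical
  rw [← Finset.sum_image hinj]
  exact Finset.sum_le_sum_of_subset_of_nonneg (Finset.image_subset_iff.2 hφ) fun u hu _ => hF u hu

section

variable {R : Type*} [CommRing R] [IsDedekindDomain R]

lemma pow_sup_eq_top_of_not_dvd {P J : Ideal R} (hP : P ≠ ⊥) (hPp : P.IsPrime) (h : ¬P ∣ J)
    (ν : ℕ) : P ^ ν ⊔ J = ⊤ :=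
  Ideal.pow_sup_eq_top ((hPp.isMaximal hP).1.2 _ (left_lt_sup.2 (mt Ideal.dvd_iff_le.2 h)))

lemma map_prod_pow_of_isPrime {M : Type*} [CommMonoid M] {f : Ideal R → M} (hf_one : f ⊤ = 1)
    (hf_mul : ∀ I J : Ideal R, I ≠ ⊥ → J ≠ ⊥ → I ⊔ J = ⊤ → f (I * J) = f I * f J)
    {s : Finset (Ideal R)} (hs : ∀ P ∈ s, P ≠ ⊥ ∧ P.IsPrime) (e : Ideal R → ℕ) :
    f (∏ P ∈ s, P ^ e P) = ∏ P ∈ s, f (P ^ e P) := by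
  classical
  induction s using Finset.induction_on with
  | empty => simpa [Ideal.one_eq_top] using hf_one
  | insert P s hPs ih =>
    rw [Finset.forall_mem_insert] at hs
    obtain ⟨⟨hP, hPp⟩, hs⟩ := hs
    have hcop : P ^ e P ⊔ ∏ Q ∈ s, Q ^ e Q = ⊤ :=
      Ideal.sup_prod_eq_top fun Q hQ => Ideal.pow_sup_pow_eq_top <|
        (hPp.isMaximal hP).coprime_of_ne ((hs Q hQ).2.isMaximal (hs Q hQ).1)
          fun h => hPs (h ▸ hQ)
    have hprod : ∏ Q ∈ s, Q ^ e Q ≠ ⊥ :=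
      Finset.prod_ne_zero_iff.2 fun Q hQ => pow_ne_zero _ (hs Q hQ).1
    rw [Finset.prod_insert hPs, Finset.prod_insert hPs,
      hf_mul _ _ (pow_ne_zero _ hP) hprod hcop, ih hs]

section Count

variable [DecidableEq (Ideal R)]

lemma prod_pow_count_normalizedFactors {I : Ideal R} (hI : I ≠ ⊥) {s : Finset (Ideal R)}
    (hs : (normalizedFactors I).toFinset ⊆ s) :
    ∏ P ∈ s, P ^ (normalizedFactors I).count P = I := by
  rw [← Finset.prod_subset hs fun P _ hP => by
      rw [Multiset.count_eq_zero_of_notMem (mt Multiset.mem_toFinset.2 hP), pow_zero],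
    ← Finset.prod_multiset_count, Ideal.prod_normalizedFactors_eq_self hI]

lemma exists_eq_pow_count_mul_not_dvd {I P : Ideal R} (hI : I ≠ ⊥) (hP : Prime P) :
    ∃ J, I = P ^ (normalizedFactors I).count P * J ∧ ¬P ∣ J := by
  have h := (FiniteMultiplicity.of_prime_left hP hI).exists_eq_pow_mul_and_not_dvd
  rwa [multiplicity_eq_count_normalizedFactors hP.irreducible hI, normalize_eq] at h

end Count

variable [Module.Free ℤ R] {f : Ideal R → ℝ}

lemma ofReal_div_absNorm_prod_pow (hf_nonneg : ∀ I : Ideal R, I ≠ ⊥ → 0 ≤ f I)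
    (hf_one : f ⊤ = 1)
    (hf_mul : ∀ I J : Ideal R, I ≠ ⊥ → J ≠ ⊥ → I ⊔ J = ⊤ → f (I * J) = f I * f J)
    {s : Finset (Ideal R)} (hs : ∀ P ∈ s, P ≠ ⊥ ∧ P.IsPrime) (e : Ideal R → ℕ) :
    ENNReal.ofReal (f (∏ P ∈ s, P ^ e P) / Ideal.absNorm (∏ P ∈ s, P ^ e P)) =
      ∏ P ∈ s, ENNReal.ofReal (f (P ^ e P) / (Ideal.absNorm P : ℝ) ^ e P) := by
  rw [map_prod_pow_of_isPrime hf_one hf_mul hs, map_prod, Nat.cast_prod,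
    ← Finset.prod_div_distrib, ENNReal.ofReal_prod_of_nonneg fun P hP => ?_]
  · simp only [map_pow, Nat.cast_pow]
  · exact div_nonneg (hf_nonneg _ (pow_ne_zero _ (hs P hP).1)) (Nat.cast_nonneg _)

variable [Module.Finite ℤ R]

lemma Ideal.absNorm_pos_of_ne_bot {I : Ideal R} (hI : I ≠ ⊥) : 0 < (Ideal.absNorm I : ℝ) := by
  have : Ideal.absNorm I ≠ 0 := Ideal.absNorm_eq_zero_iff.not.mpr hI
  positivity

lemma Ideal.two_le_absNorm_of_isPrime {P : Ideal R} (hP : P ≠ ⊥) (hPp : P.IsPrime) :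
    (2 : ℝ) ≤ Ideal.absNorm P := by
  have h0 : Ideal.absNorm P ≠ 0 := Ideal.absNorm_eq_zero_iff.not.mpr hP
  have h1 : Ideal.absNorm P ≠ 1 := Ideal.absNorm_eq_one_iff.not.mpr hPp.ne_top
  exact_mod_cast (by omega : 2 ≤ Ideal.absNorm P)

lemma Ideal.absNorm_le_of_dvd {I J : Ideal R} (h : J ∣ I) (hI : I ≠ ⊥) :
    (Ideal.absNorm J : ℝ) ≤ Ideal.absNorm I := by
  have hpos : 0 < Ideal.absNorm I := Nat.pos_of_ne_zero (Ideal.absNorm_eq_zero_iff.not.mpr hI)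
  exact_mod_cast Nat.le_of_dvd hpos (Ideal.absNorm_dvd_absNorm_of_le (Ideal.le_of_dvd h))

lemma mul_log_absNorm_pow_nonneg (hf_nonneg : ∀ I : Ideal R, I ≠ ⊥ → 0 ≤ f I) {P : Ideal R}
    (hP : P ≠ ⊥) (ν : ℕ) : 0 ≤ f (P ^ ν) * Real.log ((Ideal.absNorm P : ℝ) ^ ν) :=
  mul_nonneg (hf_nonneg _ (pow_ne_zero _ hP))
    (Real.log_nonneg (one_le_pow₀ (Nat.one_le_cast.2 (Nat.pos_of_ne_zero
      (Ideal.absNorm_eq_zero_iff.not.2 hP)))))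

lemma le_floor_of_absNorm_pow_le {P : Ideal R} (hP : P ≠ ⊥) (hPp : P.IsPrime) {ν : ℕ} {x : ℝ}
    (h : (Ideal.absNorm P : ℝ) ^ ν ≤ x) : ν ≤ ⌊x⌋₊ := by
  refine Nat.le_floor (le_of_lt ?_)
  calc (ν : ℝ) < 2 ^ ν := by exact_mod_cast Nat.lt_two_pow_self
    _ ≤ (Ideal.absNorm P : ℝ) ^ ν := by gcongr; exact Ideal.two_le_absNorm_of_isPrime hP hPp
    _ ≤ x := h

lemma log_absNorm_eq_sum [DecidableEq (Ideal R)] {I : Ideal R} (hI : I ≠ ⊥) :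
    Real.log (Ideal.absNorm I) = ∑ P ∈ (normalizedFactors I).toFinset,
      Real.log ((Ideal.absNorm P : ℝ) ^ (normalizedFactors I).count P) := by
  conv_lhs => rw [← prod_pow_count_normalizedFactors hI subset_rfl]
  rw [map_prod, Nat.cast_prod, Real.log_prod fun P hP => ?_]
  · simp only [map_pow, Nat.cast_pow]
  · have hP := prime_of_normalized_factor P (Multiset.mem_toFinset.1 hP)
    exact Nat.cast_ne_zero.2 (Ideal.absNorm_eq_zero_iff.not.2 (pow_ne_zero _ hP.ne_zero))

lemma finite_setOf_ne_bot_absNorm_le (x : ℝ) :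
    {I : Ideal R | I ≠ ⊥ ∧ (Ideal.absNorm I : ℝ) ≤ x}.Finite :=
  (Ring.HasFiniteQuotients.finite_absNorm_le ⌊x⌋₊).subset fun _ hI => Nat.le_floor hI.2

lemma finite_setOf_isPrime_absNorm_le (x : ℝ) :
    {P : Ideal R | P ≠ ⊥ ∧ P.IsPrime ∧ (Ideal.absNorm P : ℝ) ≤ x}.Finite :=
  (finite_setOf_ne_bot_absNorm_le x).subset fun _ hP => ⟨hP.1, hP.2.2⟩

variable (R)

noncomputable def idealsOfNormLE (x : ℝ) : Finset (Ideal R) :=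
  (finite_setOf_ne_bot_absNorm_le x).toFinset

noncomputable def primesOfNormLE (x : ℝ) : Finset (Ideal R) :=
  (finite_setOf_isPrime_absNorm_le x).toFinset

noncomputable def primePowersOfNormLE (y : ℝ) : Finset (Ideal R × ℕ) :=
  (primesOfNormLE R y ×ˢ Finset.range (⌊y⌋₊ + 1)).filter
    fun q => 1 ≤ q.2 ∧ (Ideal.absNorm q.1 : ℝ) ^ q.2 ≤ y

variable {R}

@[simp]
lemma mem_idealsOfNormLE {x : ℝ} {I : Ideal R} :
    I ∈ idealsOfNormLE R x ↔ I ≠ ⊥ ∧ (Ideal.absNorm I : ℝ) ≤ x :=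
  Set.Finite.mem_toFinset _

@[simp]
lemma mem_primesOfNormLE {x : ℝ} {P : Ideal R} :
    P ∈ primesOfNormLE R x ↔ P ≠ ⊥ ∧ P.IsPrime ∧ (Ideal.absNorm P : ℝ) ≤ x :=
  Set.Finite.mem_toFinset _

lemma mem_primePowersOfNormLE {y : ℝ} {q : Ideal R × ℕ} :
    q ∈ primePowersOfNormLE R y ↔
      q.1 ≠ ⊥ ∧ q.1.IsPrime ∧ 1 ≤ q.2 ∧ (Ideal.absNorm q.1 : ℝ) ^ q.2 ≤ y := by
  simp only [primePowersOfNormLE, Finset.mem_filter, Finset.mem_product, mem_primesOfNormLE,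
    Finset.mem_range, Nat.lt_succ_iff]
  refine ⟨fun ⟨⟨⟨hP, hPp, _⟩, _⟩, hν, hle⟩ => ⟨hP, hPp, hν, hle⟩,
    fun ⟨hP, hPp, hν, hle⟩ => ⟨⟨⟨hP, hPp, ?_⟩, le_floor_of_absNorm_pow_le hP hPp hle⟩, hν, hle⟩⟩
  calc (Ideal.absNorm q.1 : ℝ) = (Ideal.absNorm q.1 : ℝ) ^ 1 := (pow_one _).symm
    _ ≤ (Ideal.absNorm q.1 : ℝ) ^ q.2 :=
      pow_le_pow_right₀ (by linarith [Ideal.two_le_absNorm_of_isPrime hP hPp]) hν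
    _ ≤ y := hle

lemma finsum_mem_idealsOfNormLE (g : Ideal R → ℝ) (x : ℝ) :
    ∑ᶠ I ∈ {I : Ideal R | I ≠ ⊥ ∧ (Ideal.absNorm I : ℝ) ≤ x}, g I =
      ∑ I ∈ idealsOfNormLE R x, g I :=
  finsum_mem_eq_finite_toFinset_sum _ _

lemma finsum_mem_primesOfNormLE (g : Ideal R → ℝ) (x : ℝ) :
    ∑ᶠ P ∈ {P : Ideal R | P ≠ ⊥ ∧ P.IsPrime ∧ (Ideal.absNorm P : ℝ) ≤ x}, g P =
      ∑ P ∈ primesOfNormLE R x, g P :=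
  finsum_mem_eq_finite_toFinset_sum _ _

lemma finprod_mem_primesOfNormLE {M : Type*} [CommMonoid M] (g : Ideal R → M) (x : ℝ) :
    ∏ᶠ P ∈ {P : Ideal R | P ≠ ⊥ ∧ P.IsPrime ∧ (Ideal.absNorm P : ℝ) ≤ x}, g P =
      ∏ P ∈ primesOfNormLE R x, g P :=
  finprod_mem_eq_finite_toFinset_prod _ _

lemma prod_primesOfNormLE_pow_count [DecidableEq (Ideal R)] {x : ℝ} {I : Ideal R}
    (hI : I ∈ idealsOfNormLE R x) :
    ∏ P ∈ primesOfNormLE R x, P ^ (normalizedFactors I).count P = I := by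
  obtain ⟨hI, hIx⟩ := mem_idealsOfNormLE.1 hI
  refine prod_pow_count_normalizedFactors hI fun P hP => ?_
  rw [Multiset.mem_toFinset, Ideal.mem_normalizedFactors_iff hI] at hP
  refine mem_primesOfNormLE.2 ⟨?_, hP.1, (Ideal.absNorm_le_of_dvd ?_ hI).trans hIx⟩
  · rintro rfl
    exact hI (le_bot_iff.1 hP.2)
  · exact Ideal.dvd_iff_le.2 hP.2

theorem ofReal_sum_div_absNorm_le_prod_tsum (hf_nonneg : ∀ I : Ideal R, I ≠ ⊥ → 0 ≤ f I)
    (hf_one : f ⊤ = 1)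
    (hf_mul : ∀ I J : Ideal R, I ≠ ⊥ → J ≠ ⊥ → I ⊔ J = ⊤ → f (I * J) = f I * f J) (x : ℝ) :
    ENNReal.ofReal (∑ I ∈ idealsOfNormLE R x, f I / Ideal.absNorm I) ≤
      ∏ P ∈ primesOfNormLE R x,
        ∑' ν : ℕ, ENNReal.ofReal (f (P ^ ν) / (Ideal.absNorm P : ℝ) ^ ν) := by
  classical
  set T := idealsOfNormLE R x
  set S := primesOfNormLE R x
  set g : Ideal R → ℕ → ℝ≥0∞ := fun P ν => ENNReal.ofReal (f (P ^ ν) / (Ideal.absNorm P : ℝ) ^ ν)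
  set v : Ideal R → ∀ P ∈ S, ℕ := fun I P _ => (normalizedFactors I).count P
  have hS : ∀ P ∈ S, P ≠ ⊥ ∧ P.IsPrime := fun P hP =>
    ⟨(mem_primesOfNormLE.1 hP).1, (mem_primesOfNormLE.1 hP).2.1⟩
  have hexp : ∀ I ∈ T, v I ∈ S.pi fun _ => Finset.range (⌊x⌋₊ + 1) := by
    intro I hI
    refine Finset.mem_pi.2 fun P hP => Finset.mem_range_succ_iff.2 ?_
    refine le_floor_of_absNorm_pow_le (hS P hP).1 (hS P hP).2 ?_
    have hdvd : P ^ (normalizedFactors I).count P ∣ I := by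
      conv_rhs => rw [← prod_primesOfNormLE_pow_count hI]
      exact Finset.dvd_prod_of_mem _ hP
    calc (Ideal.absNorm P : ℝ) ^ (normalizedFactors I).count P
        = Ideal.absNorm (P ^ (normalizedFactors I).count P) := by simp
      _ ≤ Ideal.absNorm I := Ideal.absNorm_le_of_dvd hdvd (mem_idealsOfNormLE.1 hI).1
      _ ≤ x := (mem_idealsOfNormLE.1 hI).2
  have hinj : Set.InjOn v T := by
    intro I hI J hJ hIJ
    rw [← prod_primesOfNormLE_pow_count hI, ← prod_primesOfNormLE_pow_count hJ]
    exact Finset.prod_congr rfl fun P hP => congrArg (P ^ ·) (congr_fun₂ hIJ P hP)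
  calc ENNReal.ofReal (∑ I ∈ T, f I / Ideal.absNorm I)
      = ∑ I ∈ T, ∏ P ∈ S.attach, g P (v I P P.2) := by
        rw [ENNReal.ofReal_sum_of_nonneg fun I hI =>
          div_nonneg (hf_nonneg I (mem_idealsOfNormLE.1 hI).1) (Nat.cast_nonneg _)]
        refine Finset.sum_congr rfl fun I hI => ?_
        rw [Finset.prod_attach S fun P => g P ((normalizedFactors I).count P),
          ← ofReal_div_absNorm_prod_pow hf_nonneg hf_one hf_mul hS,
          prod_primesOfNormLE_pow_count hI]
    _ ≤ ∑ e ∈ S.pi fun _ => Finset.range (⌊x⌋₊ + 1), ∏ P ∈ S.attach, g P (e P P.2) :=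
        Finset.sum_comp_le_sum_of_injOn (fun e : ∀ P ∈ S, ℕ => ∏ P ∈ S.attach, g P (e P P.2))
          hexp hinj fun _ _ => zero_le
    _ = ∏ P ∈ S, ∑ ν ∈ Finset.range (⌊x⌋₊ + 1), g P ν := (Finset.prod_sum _ _ _).symm
    _ ≤ ∏ P ∈ S, ∑' ν, g P ν := Finset.prod_le_prod' fun P _ => ENNReal.sum_le_tsum _

lemma sum_primePowersOfNormLE_le (hf_nonneg : ∀ I : Ideal R, I ≠ ⊥ → 0 ≤ f I) {A B : ℝ}
    (hA_bound : ∀ y : ℝ, 0 ≤ y →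
      (∑ᶠ P ∈ {P : Ideal R | P ≠ ⊥ ∧ P.IsPrime ∧ (Ideal.absNorm P : ℝ) ≤ y},
        f P * Real.log (Ideal.absNorm P)) ≤ A * y)
    (hB_bound : ∀ S : Finset (Ideal R × ℕ),
      (∀ q ∈ S, q.1 ≠ ⊥ ∧ q.1.IsPrime ∧ 2 ≤ q.2) →
      (∑ q ∈ S, f (q.1 ^ q.2) * Real.log ((Ideal.absNorm q.1 : ℝ) ^ q.2) /
        (Ideal.absNorm q.1 : ℝ) ^ q.2) ≤ B) {y : ℝ} (hy : 0 ≤ y) :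
    ∑ q ∈ primePowersOfNormLE R y, f (q.1 ^ q.2) * Real.log ((Ideal.absNorm q.1 : ℝ) ^ q.2) ≤
      (A + B) * y := by
  rw [← Finset.sum_filter_add_sum_filter_not _ fun q => q.2 = 1, add_mul]
  refine add_le_add ?_ ?_
  · have hprimes : ∑ q ∈ primePowersOfNormLE R y with q.2 = 1,
          f (q.1 ^ q.2) * Real.log ((Ideal.absNorm q.1 : ℝ) ^ q.2) =
        ∑ P ∈ primesOfNormLE R y, f P * Real.log (Ideal.absNorm P) := by
      refine Finset.sum_nbij' Prod.fst (fun P => (P, 1)) ?_ ?_ ?_ ?_ ?_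
      · rintro ⟨P, ν⟩ hq
        simp only [Finset.mem_filter, mem_primePowersOfNormLE] at hq
        obtain ⟨⟨hP, hPp, -, hle⟩, rfl⟩ := hq
        exact mem_primesOfNormLE.2 ⟨hP, hPp, by simpa using hle⟩
      all_goals simp +contextual [mem_primePowersOfNormLE]
    rw [hprimes, ← finsum_mem_primesOfNormLE]
    exact hA_bound y hy
  · have hpowers : ∀ q ∈ (primePowersOfNormLE R y).filter fun q => ¬q.2 = 1,
        q.1 ≠ ⊥ ∧ q.1.IsPrime ∧ 2 ≤ q.2 := by
      intro q hq
      obtain ⟨⟨hP, hPp, hν, -⟩, hν1⟩ :=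
        Finset.mem_filter.1 hq |>.imp_left mem_primePowersOfNormLE.1
      exact ⟨hP, hPp, by omega⟩
    calc _ ≤ ∑ q ∈ primePowersOfNormLE R y with ¬q.2 = 1,
          f (q.1 ^ q.2) * Real.log ((Ideal.absNorm q.1 : ℝ) ^ q.2) /
            (Ideal.absNorm q.1 : ℝ) ^ q.2 * y := Finset.sum_le_sum fun q hq => ?_
      _ ≤ B * y := by rw [← Finset.sum_mul]; gcongr; exact hB_bound _ hpowers
    obtain ⟨hP, -, -, hle⟩ := mem_primePowersOfNormLE.1 (Finset.mem_filter.1 hq).1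
    rw [div_mul_eq_mul_div, le_div_iff₀ (pow_pos (Ideal.absNorm_pos_of_ne_bot hP) _)]
    exact mul_le_mul_of_nonneg_left hle (mul_log_absNorm_pow_nonneg hf_nonneg hP _)

lemma sum_mul_log_absNorm_eq_sum_sigma [DecidableEq (Ideal R)] (x : ℝ) :
    ∑ I ∈ idealsOfNormLE R x, f I * Real.log (Ideal.absNorm I) =
      ∑ p ∈ (idealsOfNormLE R x).sigma fun I => (normalizedFactors I).toFinset,
        f p.1 * Real.log ((Ideal.absNorm p.2 : ℝ) ^ (normalizedFactors p.1).count p.2) := by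
  rw [Finset.sum_sigma]
  refine Finset.sum_congr rfl fun I hI => ?_
  rw [log_absNorm_eq_sum (mem_idealsOfNormLE.1 hI).1, Finset.mul_sum]

lemma mem_sigma_primePowersOfNormLE_of_eq_pow_mul {x : ℝ} {I J P : Ideal R} {ν : ℕ}
    (hI : I ∈ idealsOfNormLE R x) (hP : Prime P) (hν : 1 ≤ ν) (hIJ : I = P ^ ν * J) :
    (⟨J, P, ν⟩ : Σ _ : Ideal R, Ideal R × ℕ) ∈
      (idealsOfNormLE R x).sigma fun J => primePowersOfNormLE R (x / Ideal.absNorm J) := by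
  obtain ⟨hI, hIx⟩ := mem_idealsOfNormLE.1 hI
  have hJ : J ≠ ⊥ := right_ne_zero_of_mul (hIJ ▸ hI)
  have hnorm : (Ideal.absNorm I : ℝ) = (Ideal.absNorm P : ℝ) ^ ν * Ideal.absNorm J := by
    simp [hIJ]
  refine Finset.mem_sigma.2 ⟨mem_idealsOfNormLE.2 ⟨hJ, ?_⟩, mem_primePowersOfNormLE.2
    ⟨hP.ne_zero, Ideal.isPrime_of_prime hP, hν, ?_⟩⟩
  · exact (Ideal.absNorm_le_of_dvd (Dvd.intro_left _ hIJ.symm) hI).trans hIx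
  · rw [le_div_iff₀ (Ideal.absNorm_pos_of_ne_bot hJ), ← hnorm]
    exact hIx

lemma sum_mul_log_absNorm_le_sum_sigma (hf_nonneg : ∀ I : Ideal R, I ≠ ⊥ → 0 ≤ f I)
    (hf_mul : ∀ I J : Ideal R, I ≠ ⊥ → J ≠ ⊥ → I ⊔ J = ⊤ → f (I * J) = f I * f J) (x : ℝ) :
    ∑ I ∈ idealsOfNormLE R x, f I * Real.log (Ideal.absNorm I) ≤
      ∑ u ∈ (idealsOfNormLE R x).sigma fun J => primePowersOfNormLE R (x / Ideal.absNorm J),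
        f u.1 * (f (u.2.1 ^ u.2.2) * Real.log ((Ideal.absNorm u.2.1 : ℝ) ^ u.2.2)) := by
  classical
  set T := idealsOfNormLE R x
  choose! J hJ hPJ using fun (I P : Ideal R) (hI : I ≠ ⊥) (hP : Prime P) =>
    exists_eq_pow_count_mul_not_dvd hI hP
  set φ : (Σ _ : Ideal R, Ideal R) → (Σ _ : Ideal R, Ideal R × ℕ) := fun p =>
    ⟨J p.1 p.2, p.2, (normalizedFactors p.1).count p.2⟩
  have hfactor : ∀ p ∈ T.sigma fun I => (normalizedFactors I).toFinset,
      p.1 ≠ ⊥ ∧ Prime p.2 ∧ 1 ≤ (normalizedFactors p.1).count p.2 := by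
    rintro ⟨I, P⟩ hp
    obtain ⟨hI, hP⟩ := Finset.mem_sigma.1 hp
    rw [Multiset.mem_toFinset] at hP
    exact ⟨(mem_idealsOfNormLE.1 hI).1, prime_of_normalized_factor P hP, Multiset.count_pos.2 hP⟩
  have hinj : Set.InjOn φ (T.sigma fun I => (normalizedFactors I).toFinset) := by
    rintro ⟨I, P⟩ hp ⟨I', P'⟩ hp' h
    obtain ⟨hI, hP, -⟩ := hfactor _ hp
    obtain ⟨hI', -, -⟩ := hfactor _ hp'
    simp only [φ, Sigma.mk.inj_iff, Prod.mk.injEq, heq_eq_eq] at h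
    obtain ⟨hJJ', rfl, hν⟩ := h
    have : I = I' := by rw [hJ I P hI hP, hJ I' P hI' hP, hJJ', hν]
    rw [this]
  have hmaps : ∀ p ∈ T.sigma fun I => (normalizedFactors I).toFinset,
      φ p ∈ T.sigma fun J => primePowersOfNormLE R (x / Ideal.absNorm J) := by
    rintro ⟨I, P⟩ hp
    obtain ⟨hI, hP, hν⟩ := hfactor _ hp
    exact mem_sigma_primePowersOfNormLE_of_eq_pow_mul (Finset.mem_sigma.1 hp).1 hP hν
      (hJ I P hI hP)
  rw [sum_mul_log_absNorm_eq_sum_sigma]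
  refine le_of_eq_of_le (Finset.sum_congr rfl fun ⟨I, P⟩ hp => ?_)
    (Finset.sum_comp_le_sum_of_injOn (φ := φ) _ hmaps hinj fun u hu => ?_)
  · obtain ⟨hI, hP, -⟩ := hfactor _ hp
    have hcop := pow_sup_eq_top_of_not_dvd hP.ne_zero (Ideal.isPrime_of_prime hP)
      (hPJ I P hI hP) ((normalizedFactors I).count P)
    have hJ0 : J I P ≠ ⊥ := right_ne_zero_of_mul (hJ I P hI hP ▸ hI)
    simp only [φ]
    rw [← mul_assoc, mul_comm (f (J I P)), ← hf_mul _ _ (pow_ne_zero _ hP.ne_zero) hJ0 hcop,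
      ← hJ I P hI hP]
  · obtain ⟨hJ, hP⟩ := Finset.mem_sigma.1 hu
    exact mul_nonneg (hf_nonneg _ (mem_idealsOfNormLE.1 hJ).1)
      (mul_log_absNorm_pow_nonneg hf_nonneg (mem_primePowersOfNormLE.1 hP).1 _)

theorem sum_mul_log_absNorm_le (hf_nonneg : ∀ I : Ideal R, I ≠ ⊥ → 0 ≤ f I)
    (hf_mul : ∀ I J : Ideal R, I ≠ ⊥ → J ≠ ⊥ → I ⊔ J = ⊤ → f (I * J) = f I * f J) {C : ℝ}
    (hC : ∀ y, 0 ≤ y → ∑ q ∈ primePowersOfNormLE R y,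
      f (q.1 ^ q.2) * Real.log ((Ideal.absNorm q.1 : ℝ) ^ q.2) ≤ C * y) (x : ℝ) :
    ∑ I ∈ idealsOfNormLE R x, f I * Real.log (Ideal.absNorm I) ≤
      C * x * ∑ I ∈ idealsOfNormLE R x, f I / Ideal.absNorm I := by
  refine (sum_mul_log_absNorm_le_sum_sigma hf_nonneg hf_mul x).trans ?_
  rw [Finset.sum_sigma, Finset.mul_sum]
  refine Finset.sum_le_sum fun J hJ => ?_
  obtain ⟨hJ, hJx⟩ := mem_idealsOfNormLE.1 hJ
  simp only [← Finset.mul_sum]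
  calc _ ≤ f J * (C * (x / Ideal.absNorm J)) := mul_le_mul_of_nonneg_left
        (hC _ (div_nonneg ((Nat.cast_nonneg _).trans hJx) (Nat.cast_nonneg _))) (hf_nonneg J hJ)
    _ = C * x * (f J / Ideal.absNorm J) := by ring

lemma sum_mul_log_le (hf_nonneg : ∀ I : Ideal R, I ≠ ⊥ → 0 ≤ f I) {x : ℝ} (hx : 0 < x) :
    (∑ I ∈ idealsOfNormLE R x, f I) * Real.log x ≤
      ∑ I ∈ idealsOfNormLE R x, f I * Real.log (Ideal.absNorm I) +
        x * ∑ I ∈ idealsOfNormLE R x, f I / Ideal.absNorm I := by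
  rw [Finset.sum_mul, Finset.mul_sum, ← Finset.sum_add_distrib]
  refine Finset.sum_le_sum fun I hI => ?_
  obtain ⟨hI, -⟩ := mem_idealsOfNormLE.1 hI
  have hN := Ideal.absNorm_pos_of_ne_bot hI
  have hlog : Real.log x ≤ Real.log (Ideal.absNorm I) + x / Ideal.absNorm I := by
    rw [← sub_le_iff_le_add', ← Real.log_div hx.ne' hN.ne']
    exact (Real.log_le_sub_one_of_pos (div_pos hx hN)).trans (by linarith)
  calc f I * Real.log x ≤ f I * (Real.log (Ideal.absNorm I) + x / Ideal.absNorm I) :=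
        mul_le_mul_of_nonneg_left hlog (hf_nonneg I hI)
    _ = _ := by ring

end

open NumberField

theorem stmt_1_general (k : Type*) [Field k] [NumberField k]
    (f : Ideal (𝓞 k) → ℝ)
    (hf_nonneg : ∀ I : Ideal (𝓞 k), I ≠ ⊥ → 0 ≤ f I)
    (hf_one : f ⊤ = 1)
    (hf_mul : ∀ I J : Ideal (𝓞 k), I ≠ ⊥ → J ≠ ⊥ → I ⊔ J = ⊤ → f (I * J) = f I * f J)
    (A B : ℝ)
    (hA_bound : ∀ y : ℝ, 0 ≤ y →
      (∑ᶠ P ∈ {P : Ideal (𝓞 k) | P ≠ ⊥ ∧ P.IsPrime ∧ (Ideal.absNorm P : ℝ) ≤ y},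
        f P * Real.log (Ideal.absNorm P)) ≤ A * y)
    (hB_bound : ∀ S : Finset (Ideal (𝓞 k) × ℕ),
      (∀ q ∈ S, q.1 ≠ ⊥ ∧ q.1.IsPrime ∧ 2 ≤ q.2) →
      (∑ q ∈ S, f (q.1 ^ q.2) * Real.log ((Ideal.absNorm q.1 : ℝ) ^ q.2) /
        (Ideal.absNorm q.1 : ℝ) ^ q.2) ≤ B) :
    ∀ x : ℝ, 1 < x →
      ENNReal.ofReal (∑ᶠ I ∈ {I : Ideal (𝓞 k) | I ≠ ⊥ ∧ (Ideal.absNorm I : ℝ) ≤ x}, f I) ≤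
        ENNReal.ofReal ((A + B + 1) * (x / Real.log x)) *
          ∏ᶠ P ∈ {P : Ideal (𝓞 k) | P ≠ ⊥ ∧ P.IsPrime ∧ (Ideal.absNorm P : ℝ) ≤ x},
            ∑' ν : ℕ, ENNReal.ofReal (f (P ^ ν) / (Ideal.absNorm P : ℝ) ^ ν) := by
  intro x hx
  set Q := ∑ I ∈ idealsOfNormLE (𝓞 k) x, f I / Ideal.absNorm I
  have hQ : 0 ≤ Q := Finset.sum_nonneg fun I hI =>
    div_nonneg (hf_nonneg I (mem_idealsOfNormLE.1 hI).1) (Nat.cast_nonneg _)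
  have hlog_sum := (sum_mul_log_le hf_nonneg (zero_lt_one.trans hx)).trans <| add_le_add
    (sum_mul_log_absNorm_le hf_nonneg hf_mul
      (fun _ hy => sum_primePowersOfNormLE_le hf_nonneg hA_bound hB_bound hy) x) le_rfl
  have hsum : ∑ I ∈ idealsOfNormLE (𝓞 k) x, f I ≤ (A + B + 1) * (x / Real.log x) * Q := by
    rw [← le_div_iff₀ (Real.log_pos hx)] at hlog_sum
    exact hlog_sum.trans_eq (by ring)
  rw [finsum_mem_idealsOfNormLE, finprod_mem_primesOfNormLE]
  calc _ ≤ ENNReal.ofReal ((A + B + 1) * (x / Real.log x) * Q) := ENNReal.ofReal_le_ofReal hsum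
    _ = ENNReal.ofReal ((A + B + 1) * (x / Real.log x)) * ENNReal.ofReal Q :=
        ENNReal.ofReal_mul' hQ
    _ ≤ _ := by
        gcongr
        exact ofReal_sum_div_absNorm_le_prod_tsum hf_nonneg hf_one hf_mul x

/-- **Mean value theorem for multiplicative functions on ideals**: Euler-product form.
The Euler factors are sums in the extended nonnegative reals. -/
theorem stmt_1 (k : Type*) [Field k] [NumberField k]
    (f : Ideal (𝓞 k) → ℝ)
    (hf_nonneg : ∀ I : Ideal (𝓞 k), I ≠ ⊥ → 0 ≤ f I)
    (hf_one : f ⊤ = 1)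
    (hf_mul : ∀ I J : Ideal (𝓞 k), I ≠ ⊥ → J ≠ ⊥ → I ⊔ J = ⊤ → f (I * J) = f I * f J)
    (A B : ℝ) (hA : 0 ≤ A) (hB : 0 ≤ B)
    (hA_bound : ∀ y : ℝ, 0 ≤ y →
      (∑ᶠ P ∈ {P : Ideal (𝓞 k) | P ≠ ⊥ ∧ P.IsPrime ∧ (Ideal.absNorm P : ℝ) ≤ y},
        f P * Real.log (Ideal.absNorm P)) ≤ A * y)
    (hB_bound : ∀ S : Finset (Ideal (𝓞 k) × ℕ),
      (∀ q ∈ S, q.1 ≠ ⊥ ∧ q.1.IsPrime ∧ 2 ≤ q.2) →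
      (∑ q ∈ S, f (q.1 ^ q.2) * Real.log ((Ideal.absNorm q.1 : ℝ) ^ q.2) /
        (Ideal.absNorm q.1 : ℝ) ^ q.2) ≤ B) :
    ∀ x : ℝ, 1 < x →
      ENNReal.ofReal (∑ᶠ I ∈ {I : Ideal (𝓞 k) | I ≠ ⊥ ∧ (Ideal.absNorm I : ℝ) ≤ x}, f I) ≤
        ENNReal.ofReal ((A + B + 1) * (x / Real.log x)) *
          ∏ᶠ P ∈ {P : Ideal (𝓞 k) | P ≠ ⊥ ∧ P.IsPrime ∧ (Ideal.absNorm P : ℝ) ≤ x},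
            ∑' ν : ℕ, ENNReal.ofReal (f (P ^ ν) / (Ideal.absNorm P : ℝ) ^ ν) :=
  stmt_1_general k f hf_nonneg hf_one hf_mul A B hA_bound hB_bound
end
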